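/- arXiv:1410.0339 — 3 statements merged into one kernel-verified Lean document; each statement's English description precedes it below -/
import Mathlib

section
/- Let A be an n×n complex block shift with superdiagonal blocks A_1, …, A_{k-1}, and let M = max_{1 ≤ j ≤ k-1} ‖A_j‖. Then w(A) ≤ M·cos(π/(k+1)). -/
/-- The numerical radius `w(M)` of a square complex matrix, acting on Euclidean space:
`w(M) = sup {|⟨Mx, x⟩| : ‖x‖ = 1}` (here `inner x (M x)` is Mathlib's inner product, conjugate
linear in the first variable, so it equals the paper's `⟨Mx, x⟩`). -/
noncomputable def numRadius {ι : Type*} [Fintype ι] [DecidableEq ι] (M : Matrix ι ι ℂ) : ℝ :=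
  sSup {r : ℝ | ∃ x : EuclideanSpace ℂ ι, ‖x‖ = 1 ∧
    ‖(inner ℂ x (Matrix.toEuclideanLin M x) : ℂ)‖ = r}

/-- The operator norm `‖A‖ = max {‖Ax‖ : ‖x‖ = 1}` of a rectangular complex matrix. -/
noncomputable def opNorm {m n : Type*} [Fintype m] [Fintype n] [DecidableEq n]
    (A : Matrix m n ℂ) : ℝ :=
  sSup {r : ℝ | ∃ x : EuclideanSpace ℂ n, ‖x‖ = 1 ∧ ‖Matrix.toEuclideanLin A x‖ = r}

/-- The block shift with `k+1` diagonal blocks of sizes `n 0, …, n k` and the rectangular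
matrices `B j` (of size `n j × n (j+1)`) in the `(j, j+1)` block positions, zeros elsewhere. -/
noncomputable def blockShiftMatrix {k : ℕ} (n : Fin (k + 1) → ℕ)
    (B : ∀ j : Fin k, Matrix (Fin (n j.castSucc)) (Fin (n j.succ)) ℂ) :
    Matrix ((j : Fin (k + 1)) × Fin (n j)) ((j : Fin (k + 1)) × Fin (n j)) ℂ :=
  Matrix.of fun p q => ∑ j : Fin k,
    if h : p.1 = j.castSucc ∧ q.1 = j.succ
    then B j (Fin.cast (congrArg n h.1) p.2) (Fin.cast (congrArg n h.2) q.2)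
    else 0

/-!
Write `x = (x_0, …, x_k)` blockwise. Then `⟨Ax, x⟩ = ∑ j ⟨A_j x_{j+1}, x_j⟩`, so
`|⟨Ax, x⟩| ≤ M ∑ j t_j t_{j+1}` with `t_i = ‖x_i‖`, a quadratic form of the path graph on `k + 1`
vertices. Its top eigenvalue is `2 cos θ`, `θ = π / (k + 2)`, with the positive eigenvector
`σ_m = sin (m θ)`: applying AM-GM to each `t_j t_{j+1}` with weight `σ_{j+2} / σ_{j+1}` and
collecting terms by `σ_{m+2} + σ_m = 2 cos θ σ_{m+1}` gives `∑ j t_j t_{j+1} ≤ cos θ ∑ i t_i²`.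
-/

open Finset

lemma mul_le_sq_mul_div_add_sq_mul_div (x y : ℝ) {p q : ℝ} (hp : 0 < p) (hq : 0 < q) :
    x * y ≤ x ^ 2 * q / (2 * p) + y ^ 2 * p / (2 * q) := by
  rw [div_add_div _ _ (by positivity) (by positivity), le_div_iff₀ (by positivity)]
  nlinarith [mul_pos hp hq, sq_nonneg (x * q - y * p)]

lemma sum_mul_succ_le_of_pos_eigenvector {k : ℕ} {c : ℝ} {σ : ℕ → ℝ} (h₀ : σ 0 = 0)
    (hlast : σ (k + 2) = 0) (hpos : ∀ m ≤ k, 0 < σ (m + 1))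
    (hrec : ∀ m ≤ k, σ (m + 2) + σ m = 2 * c * σ (m + 1)) (t : Fin (k + 1) → ℝ) :
    ∑ j : Fin k, t j.castSucc * t j.succ ≤ c * ∑ i, t i ^ 2 := by
  set a : Fin (k + 1) → ℝ := fun i => t i ^ 2 * σ (i + 2) / (2 * σ (i + 1))
  set b : Fin (k + 1) → ℝ := fun i => t i ^ 2 * σ i / (2 * σ (i + 1))
  have hab : ∀ i, a i + b i = c * t i ^ 2 := fun i => by
    have := hpos i (Nat.lt_succ_iff.mp i.isLt)
    simp only [a, b]
    rw [← add_div, ← mul_add, hrec i (Nat.lt_succ_iff.mp i.isLt)]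
    field_simp
  calc ∑ j : Fin k, t j.castSucc * t j.succ
      ≤ ∑ j : Fin k, (a j.castSucc + b j.succ) := sum_le_sum fun j _ =>
        mul_le_sq_mul_div_add_sq_mul_div _ _ (hpos j j.isLt.le) (hpos (j + 1) j.isLt)
    _ = ∑ i, (a i + b i) := by
        rw [sum_add_distrib, sum_add_distrib, Fin.sum_univ_castSucc a, Fin.sum_univ_succ b]
        simp [a, b, h₀, hlast]
    _ = c * ∑ i, t i ^ 2 := by simp only [hab, mul_sum]

lemma sum_mul_succ_le_cos_mul_sum_sq {k : ℕ} (t : Fin (k + 1) → ℝ) :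
    ∑ j : Fin k, t j.castSucc * t j.succ ≤ Real.cos (Real.pi / (k + 2)) * ∑ i, t i ^ 2 := by
  set θ := Real.pi / (k + 2)
  have hkθ : ((k : ℝ) + 2) * θ = Real.pi := by simp only [θ]; field_simp
  refine sum_mul_succ_le_of_pos_eigenvector (σ := fun m => Real.sin (m * θ)) (by simp)
    (by push_cast; rw [hkθ, Real.sin_pi]) (fun m hm => ?_) (fun m _ => ?_) t
  · apply Real.sin_pos_of_pos_of_lt_pi (by positivity)
    rw [← hkθ]
    gcongr
    exact_mod_cast Nat.succ_lt_succ (Nat.lt_succ_of_le hm)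
  · push_cast
    rw [show ((m : ℝ) + 2) * θ = (m + 1) * θ + θ by ring,
      show (m : ℝ) * θ = (m + 1) * θ - θ by ring, Real.sin_add, Real.sin_sub]
    ring

section opNorm

variable {m n : Type*} [Fintype m] [Fintype n] [DecidableEq n] (A : Matrix m n ℂ)

lemma opNorm_nonneg : 0 ≤ opNorm A :=
  Real.sSup_nonneg <| by rintro r ⟨x, -, rfl⟩; positivity

lemma norm_toEuclideanLin_le_opNorm {x : EuclideanSpace ℂ n} (hx : ‖x‖ = 1) :
    ‖Matrix.toEuclideanLin A x‖ ≤ opNorm A := by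
  set L := LinearMap.toContinuousLinearMap (Matrix.toEuclideanLin A)
  refine le_csSup ⟨‖L‖, ?_⟩ ⟨x, hx, rfl⟩
  rintro r ⟨y, hy, rfl⟩
  exact (L.le_opNorm y).trans_eq (by rw [hy, mul_one])

lemma norm_toEuclideanLin_le_opNorm_mul (y : EuclideanSpace ℂ n) :
    ‖Matrix.toEuclideanLin A y‖ ≤ opNorm A * ‖y‖ := by
  obtain rfl | hy := eq_or_ne y 0
  · simp
  calc ‖Matrix.toEuclideanLin A y‖ = ‖Matrix.toEuclideanLin A ((‖y‖⁻¹ : ℂ) • y)‖ * ‖y‖ := by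
        rw [map_smul, norm_smul, norm_inv, Complex.norm_real, norm_norm]
        field_simp
    _ ≤ opNorm A * ‖y‖ := by
        gcongr
        exact norm_toEuclideanLin_le_opNorm A (norm_smul_inv_norm hy)

end opNorm

section sigmaBlock

variable {𝕜 ι : Type*} {κ : ι → Type*}

def sigmaBlock (x : EuclideanSpace 𝕜 (Σ i, κ i)) (i : ι) : EuclideanSpace 𝕜 (κ i) :=
  WithLp.toLp 2 fun a => x ⟨i, a⟩

@[simp]
lemma sigmaBlock_apply (x : EuclideanSpace 𝕜 (Σ i, κ i)) (i : ι) (a : κ i) :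
    sigmaBlock x i a = x ⟨i, a⟩ := rfl

lemma sum_norm_sigmaBlock_sq [RCLike 𝕜] [Fintype ι] [∀ i, Fintype (κ i)]
    (x : EuclideanSpace 𝕜 (Σ i, κ i)) :
    ∑ i, ‖sigmaBlock x i‖ ^ 2 = ‖x‖ ^ 2 := by
  simp only [EuclideanSpace.norm_sq_eq, Fintype.sum_sigma, sigmaBlock_apply]

end sigmaBlock

lemma inner_toEuclideanLin_eq_sum {𝕜 : Type*} [RCLike 𝕜] {m n : Type*} [Fintype m] [Fintype n]
    [DecidableEq n] (A : Matrix m n 𝕜) (x : EuclideanSpace 𝕜 m) (y : EuclideanSpace 𝕜 n) :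
    inner 𝕜 x (Matrix.toEuclideanLin A y) = ∑ p, ∑ q, starRingEnd 𝕜 (x p) * A p q * y q := by
  simp only [PiLp.inner_apply, RCLike.inner_apply', Matrix.toLpLin_apply,
    Matrix.mulVec, dotProduct, mul_sum]
  exact sum_congr rfl fun _ _ => sum_congr rfl fun _ _ => by ring

lemma inner_blockShiftMatrix {k : ℕ} (n : Fin (k + 1) → ℕ)
    (B : ∀ j : Fin k, Matrix (Fin (n j.castSucc)) (Fin (n j.succ)) ℂ)
    (x : EuclideanSpace ℂ ((j : Fin (k + 1)) × Fin (n j))) :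
    inner ℂ x (Matrix.toEuclideanLin (blockShiftMatrix n B) x) =
      ∑ j : Fin k, inner ℂ (sigmaBlock x j.castSucc)
        (Matrix.toEuclideanLin (B j) (sigmaBlock x j.succ)) := by
  simp only [inner_toEuclideanLin_eq_sum, blockShiftMatrix, Matrix.of_apply, mul_sum, sum_mul]
  refine (sum_congr rfl fun _ _ => sum_comm).trans ?_
  refine sum_comm.trans (sum_congr rfl fun j _ => ?_)
  simp only [Fintype.sum_sigma, sigmaBlock_apply]
  rw [Fintype.sum_eq_single j.castSucc fun i hi => ?_]
  · refine sum_congr rfl fun a _ => ?_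
    rw [Fintype.sum_eq_single j.succ fun i hi => ?_]
    · simp
    · simp [hi]
  · simp [hi]

lemma norm_inner_blockShiftMatrix_le {k : ℕ} (n : Fin (k + 1) → ℕ)
    (B : ∀ j : Fin k, Matrix (Fin (n j.castSucc)) (Fin (n j.succ)) ℂ) {M : ℝ} (hM₀ : 0 ≤ M)
    (hB : ∀ j, opNorm (B j) ≤ M) (x : EuclideanSpace ℂ ((j : Fin (k + 1)) × Fin (n j))) :
    ‖inner ℂ x (Matrix.toEuclideanLin (blockShiftMatrix n B) x)‖ ≤
      M * Real.cos (Real.pi / (k + 2)) * ‖x‖ ^ 2 := by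
  set t : Fin (k + 1) → ℝ := fun i => ‖sigmaBlock x i‖
  have hterm : ∀ j : Fin k, ‖inner ℂ (sigmaBlock x j.castSucc)
      (Matrix.toEuclideanLin (B j) (sigmaBlock x j.succ))‖ ≤ M * (t j.castSucc * t j.succ) :=
    fun j => calc
      _ ≤ t j.castSucc * ‖Matrix.toEuclideanLin (B j) (sigmaBlock x j.succ)‖ :=
          norm_inner_le_norm _ _
      _ ≤ t j.castSucc * (M * t j.succ) := by
          gcongr
          exact (norm_toEuclideanLin_le_opNorm_mul _ _).trans (by gcongr; exact hB j)
      _ = M * (t j.castSucc * t j.succ) := by ring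
  calc ‖inner ℂ x (Matrix.toEuclideanLin (blockShiftMatrix n B) x)‖
      ≤ ∑ j : Fin k, M * (t j.castSucc * t j.succ) := by
        rw [inner_blockShiftMatrix]
        exact (norm_sum_le _ _).trans (sum_le_sum fun j _ => hterm j)
    _ ≤ M * (Real.cos (Real.pi / (k + 2)) * ∑ i, t i ^ 2) := by
        rw [← mul_sum]
        gcongr
        exact sum_mul_succ_le_cos_mul_sum_sq t
    _ = M * Real.cos (Real.pi / (k + 2)) * ‖x‖ ^ 2 := by
        rw [sum_norm_sigmaBlock_sq, mul_assoc]

/-- For a block shift `A` with `k+1` blocks and `M = max_j ‖A_j‖`, one has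
`w(A) ≤ M · cos (π / (k + 2))`. -/
theorem numRadius_blockShift_le_max_opNorm_mul_cos {k : ℕ} (hk : 0 < k) (n : Fin (k + 1) → ℕ)
    (B : ∀ j : Fin k, Matrix (Fin (n j.castSucc)) (Fin (n j.succ)) ℂ) (M : ℝ)
    (hM : M = Finset.univ.sup'
      (Finset.univ_nonempty_iff.mpr (Fin.pos_iff_nonempty.mp hk)) fun j => opNorm (B j)) :
    numRadius (blockShiftMatrix n B) ≤ M * Real.cos (Real.pi / (k + 2)) := by
  have hB : ∀ j, opNorm (B j) ≤ M := fun j => hM ▸ le_sup' (fun j => opNorm (B j)) (mem_univ j)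
  have hM₀ : 0 ≤ M := (opNorm_nonneg _).trans (hB ⟨0, hk⟩)
  have hcos : 0 ≤ Real.cos (Real.pi / (k + 2)) := by
    refine Real.cos_nonneg_of_neg_pi_div_two_le_of_le
      ((neg_nonpos.mpr Real.pi_div_two_pos.le).trans (by positivity)) ?_
    gcongr
    exact le_add_of_nonneg_left k.cast_nonneg
  refine Real.sSup_le ?_ (mul_nonneg hM₀ hcos)
  rintro r ⟨x, hx, rfl⟩
  simpa [hx] using norm_inner_blockShiftMatrix_le n B hM₀ hB x
end

section
/- Let A be an n×n complex block shift with superdiagonal blocks A_1, …, A_{k-1}, and let m = min_{1 ≤ j ≤ k-1} m(A_j). Then w(A) ≥ m·cos(π/(k+1)). -/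
/-- The minimum modulus `m(A) = min {‖Ax‖ : ‖x‖ = 1}` of a rectangular complex matrix. -/
noncomputable def minModulus {m n : Type*} [Fintype m] [Fintype n] [DecidableEq n]
    (A : Matrix m n ℂ) : ℝ :=
  sInf {r : ℝ | ∃ x : EuclideanSpace ℂ n, ‖x‖ = 1 ∧ ‖Matrix.toEuclideanLin A x‖ = r}

/-! If `m ≤ 0` there is nothing to prove, since `w(A) ≥ 0`. Otherwise every block `A_j` is
injective, so starting from a unit vector in the last block and applying the blocks one after
the other, renormalising each time, gives unit vectors `v_j` with
`⟨A_j v_{j+1}, v_j⟩ = ‖A_j v_{j+1}‖ ≥ m`. Put `x = ∑ c_j v_j`, where `c_j = sin (j π / (N + 1))`,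
`1 ≤ j ≤ N`, is the Perron eigenvector of the path on the `N` blocks, with eigenvalue
`2 cos (π / (N + 1))`. Then `|⟨A x, x⟩| ≥ m ∑ c_j c_{j+1} = m cos (π / (N + 1)) ‖x‖²`. -/

open Matrix
open scoped InnerProductSpace

section NumericalRadius

variable {ι : Type*} [Fintype ι] [DecidableEq ι] (M : Matrix ι ι ℂ)

lemma numRadius_nonneg : 0 ≤ numRadius M :=
  Real.sSup_nonneg <| by rintro r ⟨x, -, rfl⟩; exact norm_nonneg _

lemma norm_inner_le_numRadius {x : EuclideanSpace ℂ ι} (hx : ‖x‖ = 1) :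
    ‖⟪x, toEuclideanLin M x⟫_ℂ‖ ≤ numRadius M := by
  let T := LinearMap.toContinuousLinearMap (toEuclideanLin M)
  refine le_csSup ⟨‖T‖, ?_⟩ ⟨x, hx, rfl⟩
  rintro r ⟨y, hy, rfl⟩
  calc ‖⟪y, T y⟫_ℂ‖ ≤ ‖y‖ * ‖T y‖ := norm_inner_le_norm _ _
    _ ≤ ‖y‖ * (‖T‖ * ‖y‖) := by gcongr; exact T.le_opNorm y
    _ = ‖T‖ := by rw [hy]; ring

lemma norm_inner_le_numRadius_mul_sq (x : EuclideanSpace ℂ ι) :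
    ‖⟪x, toEuclideanLin M x⟫_ℂ‖ ≤ numRadius M * ‖x‖ ^ 2 := by
  rcases eq_or_ne x 0 with rfl | hx
  · simp
  set u : EuclideanSpace ℂ ι := (‖x‖⁻¹ : ℂ) • x
  have hxu : x = (‖x‖ : ℂ) • u := by simp [u, smul_smul, hx]
  calc ‖⟪x, toEuclideanLin M x⟫_ℂ‖
      = ‖⟪(‖x‖ : ℂ) • u, toEuclideanLin M ((‖x‖ : ℂ) • u)⟫_ℂ‖ := by rw [← hxu]
    _ = ‖x‖ ^ 2 * ‖⟪u, toEuclideanLin M u⟫_ℂ‖ := by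
      rw [map_smul, inner_smul_left, inner_smul_right]; simp; ring
    _ ≤ ‖x‖ ^ 2 * numRadius M := by gcongr; exact norm_inner_le_numRadius M (norm_smul_inv_norm hx)
    _ = numRadius M * ‖x‖ ^ 2 := mul_comm _ _

end NumericalRadius

section MinimumModulus

variable {m n : Type*} [Fintype m] [Fintype n] [DecidableEq n] (A : Matrix m n ℂ)

lemma minModulus_le_norm {x : EuclideanSpace ℂ n} (hx : ‖x‖ = 1) :
    minModulus A ≤ ‖toEuclideanLin A x‖ :=
  csInf_le ⟨0, by rintro r ⟨y, -, rfl⟩; exact norm_nonneg _⟩ ⟨x, hx, rfl⟩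

lemma exists_norm_eq_one_of_minModulus_pos (h : 0 < minModulus A) :
    ∃ x : EuclideanSpace ℂ n, ‖x‖ = 1 := by
  by_contra! hx
  exact h.ne' (by simp [minModulus, hx])

lemma injective_toEuclideanLin_of_minModulus_pos (h : 0 < minModulus A) :
    Function.Injective (toEuclideanLin A) := by
  refine (injective_iff_map_eq_zero _).mpr fun x hAx => ?_
  by_contra hx
  have := minModulus_le_norm A (norm_smul_inv_norm (𝕜 := ℂ) hx)
  rw [map_smul, hAx, smul_zero, norm_zero] at this
  exact this.not_gt h

end MinimumModulus

lemma exists_unit_chain {𝕜 : Type*} [RCLike 𝕜] {k : ℕ} {E : Fin (k + 1) → Type*}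
    [∀ j, NormedAddCommGroup (E j)] [∀ j, InnerProductSpace 𝕜 (E j)]
    (T : ∀ j : Fin k, E j.succ →ₗ[𝕜] E j.castSucc) (hT : ∀ j, Function.Injective (T j))
    {u : E (Fin.last k)} (hu : ‖u‖ = 1) :
    ∃ v : ∀ j, E j, (∀ j, ‖v j‖ = 1) ∧
      ∀ j : Fin k, ⟪v j.castSucc, T j (v j.succ)⟫_𝕜 = ‖T j (v j.succ)‖ := by
  let v : ∀ j, E j := Fin.reverseInduction (motive := E) u fun j w => (‖T j w‖⁻¹ : 𝕜) • T j w
  have hv (j : Fin k) : v j.castSucc = (‖T j (v j.succ)‖⁻¹ : 𝕜) • T j (v j.succ) :=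
    Fin.reverseInduction_castSucc ..
  have hTv (j : Fin k) (h : ‖v j.succ‖ = 1) : T j (v j.succ) ≠ 0 :=
    (map_ne_zero_iff _ (hT j)).mpr (norm_ne_zero_iff.mp (h ▸ one_ne_zero))
  have hnorm (j : Fin (k + 1)) : ‖v j‖ = 1 := by
    induction j using Fin.reverseInduction with
    | last => rwa [show v (Fin.last k) = u from Fin.reverseInduction_last ..]
    | cast j ih => rw [hv]; exact norm_smul_inv_norm (hTv j ih)
  refine ⟨v, hnorm, fun j => ?_⟩
  have h0 : ‖T j (v j.succ)‖ ≠ 0 := norm_ne_zero_iff.mpr (hTv j (hnorm _))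
  rw [hv, inner_smul_left, inner_self_eq_norm_sq_to_K, map_inv₀, RCLike.conj_ofReal]
  field_simp

section PathEigenvector

open Finset Real

lemma two_mul_sum_sin_mul_sin_add (θ : ℝ) (k : ℕ) :
    2 * ∑ i ∈ range k, sin ((i + 1) * θ) * sin ((i + 2) * θ) + sin ((k + 1) * θ) * sin ((k + 2) * θ)
      = 2 * cos θ * ∑ i ∈ range (k + 1), sin ((i + 1) * θ) ^ 2 := by
  induction k with
  | zero => simp [sin_two_mul]; ring
  | succ k ih =>
    have hchain : sin ((k + 1) * θ) + sin ((k + 3) * θ) = 2 * cos θ * sin ((k + 2) * θ) := by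
      rw [show (k + 1) * θ = (k + 2) * θ - θ by ring, show (k + 3) * θ = (k + 2) * θ + θ by ring,
        sin_sub, sin_add]
      ring
    rw [sum_range_succ, sum_range_succ _ (k + 1),
      show ((k + 1 : ℕ) : ℝ) + 1 = k + 2 by push_cast; ring,
      show ((k + 1 : ℕ) : ℝ) + 2 = k + 3 by push_cast; ring]
    linear_combination ih + sin ((k + 2) * θ) * hchain

noncomputable def pathPerronVector (k : ℕ) (j : Fin (k + 1)) : ℝ :=
  sin ((j + 1) * (π / (k + 2)))

lemma pathPerronVector_pos (k : ℕ) (j : Fin (k + 1)) : 0 < pathPerronVector k j := by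
  refine sin_pos_of_pos_of_lt_pi (by positivity) ?_
  have hj : (j : ℝ) + 1 < k + 2 := by
    have : (j : ℝ) ≤ k := by exact_mod_cast j.is_le
    linarith
  rw [mul_div_assoc', div_lt_iff₀ (by positivity), mul_comm π]
  exact mul_lt_mul_of_pos_right hj pi_pos

lemma sum_pathPerronVector_mul_succ (k : ℕ) :
    ∑ j : Fin k, pathPerronVector k j.castSucc * pathPerronVector k j.succ
      = cos (π / (k + 2)) * ∑ j, pathPerronVector k j ^ 2 := by
  simp only [pathPerronVector, Fin.val_castSucc, Fin.val_succ, Nat.cast_add, Nat.cast_one,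
    add_assoc, one_add_one_eq_two]
  set θ := π / (k + 2)
  have h := two_mul_sum_sin_mul_sin_add θ k
  rw [show (k + 2 : ℝ) * θ = π from mul_div_cancel₀ _ (by positivity), sin_pi, mul_zero,
    add_zero] at h
  rw [Fin.sum_univ_eq_sum_range (fun i => sin ((i + 1) * θ) * sin ((i + 2) * θ)),
    Fin.sum_univ_eq_sum_range (fun i => sin ((i + 1) * θ) ^ 2)]
  linarith

end PathEigenvector

noncomputable def blockVector {ι : Type*} [Fintype ι] {κ : ι → Type*} [∀ i, Fintype (κ i)]
    (x : ∀ i, EuclideanSpace ℂ (κ i)) : EuclideanSpace ℂ ((i : ι) × κ i) :=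
  (LinearIsometryEquiv.piLpCurry ℂ 2 fun _ _ => ℂ).symm (WithLp.toLp 2 x)

section BlockVector

variable {ι : Type*} [Fintype ι] {κ : ι → Type*} [∀ i, Fintype (κ i)]

lemma ofLp_blockVector (x : ∀ i, EuclideanSpace ℂ (κ i)) :
    WithLp.ofLp (blockVector x) = fun p => x p.1 p.2 := rfl

lemma norm_blockVector_sq (x : ∀ i, EuclideanSpace ℂ (κ i)) :
    ‖blockVector x‖ ^ 2 = ∑ i, ‖x i‖ ^ 2 := by
  rw [blockVector, LinearIsometryEquiv.norm_map, PiLp.norm_sq_eq_of_L2]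

end BlockVector

section BlockShift

variable {k : ℕ} (n : Fin (k + 1) → ℕ)
  (B : ∀ j : Fin k, Matrix (Fin (n j.castSucc)) (Fin (n j.succ)) ℂ)

lemma blockShiftMatrix_mulVec_blockVector_apply (y : ∀ j, EuclideanSpace ℂ (Fin (n j)))
    (p : (j : Fin (k + 1)) × Fin (n j)) :
    (blockShiftMatrix n B *ᵥ WithLp.ofLp (blockVector y)) p = ∑ j : Fin k,
      if h : p.1 = j.castSucc then (B j *ᵥ WithLp.ofLp (y j.succ)) (Fin.cast (congrArg n h) p.2)
      else 0 := by
  simp only [ofLp_blockVector, mulVec, dotProduct, blockShiftMatrix, of_apply, Finset.sum_mul]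
  rw [Finset.sum_comm]
  refine Finset.sum_congr rfl fun j _ => ?_
  split_ifs with hp
  · simp only [hp, true_and]
    rw [Fintype.sum_sigma, Fintype.sum_eq_single j.succ fun b hb => by simp [hb]]
    simp
  · simp [hp]

lemma inner_blockVector_blockShiftMatrix (x y : ∀ j, EuclideanSpace ℂ (Fin (n j))) :
    ⟪blockVector x, toEuclideanLin (blockShiftMatrix n B) (blockVector y)⟫_ℂ =
      ∑ j : Fin k, ⟪x j.castSucc, toEuclideanLin (B j) (y j.succ)⟫_ℂ := by
  simp only [EuclideanSpace.inner_eq_star_dotProduct, ofLp_toLpLin, toLin'_apply,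
    blockShiftMatrix_mulVec_blockVector_apply, dotProduct, Finset.sum_mul]
  rw [Finset.sum_comm]
  refine Finset.sum_congr rfl fun j _ => ?_
  rw [Fintype.sum_sigma, Fintype.sum_eq_single j.castSucc fun b hb => by simp [hb]]
  simp [ofLp_blockVector]

variable {n B} {v : ∀ j, EuclideanSpace ℂ (Fin (n j))}
  (hv : ∀ j : Fin k, ⟪v j.castSucc, toEuclideanLin (B j) (v j.succ)⟫_ℂ =
    ‖toEuclideanLin (B j) (v j.succ)‖)
  {c : Fin (k + 1) → ℝ} (hc : ∀ j, 0 ≤ c j)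
include hv hc

lemma mul_sum_le_norm_inner_blockShiftMatrix {m : ℝ}
    (hm : ∀ j : Fin k, m ≤ ‖toEuclideanLin (B j) (v j.succ)‖) :
    m * ∑ j : Fin k, c j.castSucc * c j.succ ≤
      ‖⟪blockVector fun j => (c j : ℂ) • v j,
        toEuclideanLin (blockShiftMatrix n B) (blockVector fun j => (c j : ℂ) • v j)⟫_ℂ‖ := by
  refine le_trans ?_ (Complex.re_le_norm _)
  simp only [inner_blockVector_blockShiftMatrix, map_smul, inner_smul_left, inner_smul_right, hv,
    Complex.conj_ofReal, Complex.re_sum, Finset.mul_sum]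
  refine Finset.sum_le_sum fun j _ => ?_
  simp only [← Complex.ofReal_mul, Complex.ofReal_re]
  calc m * (c j.castSucc * c j.succ) = c j.succ * (c j.castSucc * m) := by ring
    _ ≤ _ := mul_le_mul_of_nonneg_left (mul_le_mul_of_nonneg_left (hm j) (hc _)) (hc _)

lemma mul_sum_le_numRadius_mul_sum_sq (hv_norm : ∀ j, ‖v j‖ = 1) {m : ℝ}
    (hm : ∀ j, m ≤ minModulus (B j)) :
    m * ∑ j : Fin k, c j.castSucc * c j.succ ≤ numRadius (blockShiftMatrix n B) * ∑ j, c j ^ 2 := by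
  have hX : ‖blockVector fun j => (c j : ℂ) • v j‖ ^ 2 = ∑ j, c j ^ 2 := by
    simp [norm_blockVector_sq, norm_smul, hv_norm]
  calc _ ≤ _ := mul_sum_le_norm_inner_blockShiftMatrix hv hc
        fun j => (hm j).trans (minModulus_le_norm _ (hv_norm _))
    _ ≤ _ := norm_inner_le_numRadius_mul_sq _ _
    _ = _ := by rw [hX]

end BlockShift

/-- For a block shift `A` with `k+1` blocks and `m = min_j m(A_j)`, one has
`w(A) ≥ m · cos (π / (k + 2))`. -/
theorem min_minModulus_mul_cos_le_numRadius_blockShift {k : ℕ} (hk : 0 < k)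
    (n : Fin (k + 1) → ℕ)
    (B : ∀ j : Fin k, Matrix (Fin (n j.castSucc)) (Fin (n j.succ)) ℂ) (m : ℝ)
    (hm : m = Finset.univ.inf'
      (Finset.univ_nonempty_iff.mpr (Fin.pos_iff_nonempty.mp hk)) fun j => minModulus (B j)) :
    m * Real.cos (Real.pi / (k + 2)) ≤ numRadius (blockShiftMatrix n B) := by
  have hθ : 0 < Real.pi / (k + 2) := by positivity
  have hcos : 0 ≤ Real.cos (Real.pi / (k + 2)) := Real.cos_nonneg_of_mem_Icc
    ⟨by linarith [Real.pi_pos], div_le_div_of_nonneg_left Real.pi_pos.le two_pos (by simp)⟩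
  rcases le_or_gt m 0 with hm0 | hm0
  · exact (mul_nonpos_of_nonpos_of_nonneg hm0 hcos).trans (numRadius_nonneg _)
  have hmB (j : Fin k) : m ≤ minModulus (B j) := hm ▸ Finset.inf'_le _ (Finset.mem_univ j)
  have hB_pos (j : Fin k) : 0 < minModulus (B j) := hm0.trans_le (hmB j)
  obtain ⟨u, hu⟩ : ∃ u : EuclideanSpace ℂ (Fin (n (Fin.last k))), ‖u‖ = 1 := by
    obtain ⟨k, rfl⟩ := Nat.exists_eq_add_one_of_ne_zero hk.ne'
    rw [← Fin.succ_last]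
    exact exists_norm_eq_one_of_minModulus_pos _ (hB_pos (Fin.last k))
  obtain ⟨v, hv_norm, hv⟩ := exists_unit_chain (E := fun j => EuclideanSpace ℂ (Fin (n j)))
    (fun j => toEuclideanLin (B j))
    (fun j => injective_toEuclideanLin_of_minModulus_pos _ (hB_pos j)) hu
  have key := mul_sum_le_numRadius_mul_sum_sq hv (fun j => (pathPerronVector_pos k j).le)
    hv_norm hmB
  rw [sum_pathPerronVector_mul_succ, ← mul_assoc] at key
  exact le_of_mul_le_mul_right key
    (Finset.sum_pos (fun j _ => pow_pos (pathPerronVector_pos k j) 2) Finset.univ_nonempty)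
end

section
/- Let A be the 4×4 complex matrix with rows [0, 1, 1, 0], [0, 0, 0, 1], [0, 0, 0, −1], [0, 0, 0, 0], and let A'' be the 3×3 matrix with (2,3) entry √2 and all other entries zero. Then w(A) = w(A'') = √2/2, but A is not unitarily similar to A'' ⊕ [0] (the direct sum of A'' with the 1×1 zero matrix). -/
/-- Two square complex matrices (possibly indexed by different finite types) are unitarily
similar if a unitary operator, i.e. a linear isometric equivalence of the underlying Euclidean
spaces, intertwines the induced operators. -/
def UnitarilySimilar {ι κ : Type*} [Fintype ι] [Fintype κ] [DecidableEq ι] [DecidableEq κ]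
    (A : Matrix ι ι ℂ) (B : Matrix κ κ ℂ) : Prop :=
  ∃ U : EuclideanSpace ℂ ι ≃ₗᵢ[ℂ] EuclideanSpace ℂ κ,
    ∀ x, U (Matrix.toEuclideanLin A x) = Matrix.toEuclideanLin B (U x)

open Module Matrix
open scoped ComplexConjugate

theorem EuclideanSpace.sum_norm_sq_eq_one {ι : Type*} [Fintype ι] {x : EuclideanSpace ℂ ι}
    (hx : ‖x‖ = 1) : ∑ i, ‖x i‖ ^ 2 = 1 := by
  rw [← EuclideanSpace.norm_sq_eq, hx, one_pow]

theorem Matrix.fromBlocks_single_zero {m n α : Type*} [DecidableEq m] [DecidableEq n] [Zero α]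
    (i j : m) (c : α) :
    fromBlocks (single i j c) 0 0 (0 : Matrix n n α) = single (Sum.inl i) (Sum.inl j) c := by
  ext (a | a) (b | b) <;> simp [single]

section NumRadius

variable {ι : Type*} [Fintype ι] [DecidableEq ι]

theorem inner_toEuclideanLin_eq_sum_s14 (M : Matrix ι ι ℂ) (x : EuclideanSpace ℂ ι) :
    inner ℂ x (toEuclideanLin M x) = ∑ i, ∑ j, conj (x i) * M i j * x j := by
  simp only [PiLp.inner_apply, RCLike.inner_apply, toLpLin_apply, mulVec, dotProduct,
    Finset.sum_mul]
  exact Finset.sum_congr rfl fun i _ => Finset.sum_congr rfl fun j _ => by ring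

theorem inner_toEuclideanLin_single (i j : ι) (c : ℂ) (x : EuclideanSpace ℂ ι) :
    inner ℂ x (toEuclideanLin (single i j c) x) = conj (x i) * c * x j := by
  simp [inner_toEuclideanLin_eq_sum_s14, single_apply, ite_and]

theorem numRadius_eq_of_le_of_eq {M : Matrix ι ι ℂ} {r : ℝ}
    (hle : ∀ x : EuclideanSpace ℂ ι, ‖x‖ = 1 → ‖inner ℂ x (toEuclideanLin M x)‖ ≤ r)
    (x₀ : EuclideanSpace ℂ ι) (hx₀ : ‖x₀‖ = 1) (heq : ‖inner ℂ x₀ (toEuclideanLin M x₀)‖ = r) :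
    numRadius M = r :=
  IsGreatest.csSup_eq ⟨⟨x₀, hx₀, heq⟩, by rintro _ ⟨x, hx, rfl⟩; exact hle x hx⟩

theorem numRadius_single {i j : ι} (hij : i ≠ j) (c : ℂ) :
    numRadius (single i j c) = ‖c‖ / 2 := by
  refine numRadius_eq_of_le_of_eq (fun x hx => ?_)
    (EuclideanSpace.single i (√2 / 2 : ℂ) + EuclideanSpace.single j (√2 / 2 : ℂ)) ?_ ?_
  · have hpair : ‖x i‖ ^ 2 + ‖x j‖ ^ 2 ≤ 1 := by
      rw [← EuclideanSpace.sum_norm_sq_eq_one hx, ← Finset.sum_pair (f := fun k => ‖x k‖ ^ 2) hij]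
      exact Finset.sum_le_sum_of_subset_of_nonneg (Finset.subset_univ _)
        fun k _ _ => sq_nonneg _
    rw [inner_toEuclideanLin_single, norm_mul, norm_mul, Complex.norm_conj]
    nlinarith [sq_nonneg (‖x i‖ - ‖x j‖), norm_nonneg c]
  · have horth : inner ℂ (EuclideanSpace.single i (√2 / 2 : ℂ))
        (EuclideanSpace.single j (√2 / 2 : ℂ)) = 0 := by
      simp [EuclideanSpace.inner_single_left, hij.symm]
    rw [← sq_eq_sq₀ (norm_nonneg _) zero_le_one, one_pow, norm_add_sq (𝕜 := ℂ), horth]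
    norm_num [div_pow]
  · rw [inner_toEuclideanLin_single]
    simp [hij, hij.symm, abs_of_nonneg (Real.sqrt_nonneg 2)]
    linear_combination (‖c‖ / 4) * Real.mul_self_sqrt zero_le_two

end NumRadius

theorem UnitarilySimilar.finrank_range_eq {ι κ : Type*} [Fintype ι] [Fintype κ] [DecidableEq ι]
    [DecidableEq κ] {A : Matrix ι ι ℂ} {B : Matrix κ κ ℂ} (h : UnitarilySimilar A B) :
    finrank ℂ (LinearMap.range (toEuclideanLin A)) =
      finrank ℂ (LinearMap.range (toEuclideanLin B)) := by
  obtain ⟨U, hU⟩ := h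
  have hcomp : (U.toLinearEquiv : _ →ₗ[ℂ] _) ∘ₗ toEuclideanLin A =
      toEuclideanLin B ∘ₗ U.toLinearEquiv :=
    LinearMap.ext hU
  rw [← LinearEquiv.finrank_map_eq U.toLinearEquiv, ← LinearMap.range_comp, hcomp,
    LinearMap.range_comp_of_range_eq_top _ U.toLinearEquiv.range]

theorem finrank_range_toEuclideanLin_single_le_one {ι : Type*} [Fintype ι] [DecidableEq ι]
    (i j : ι) (c : ℂ) : finrank ℂ (LinearMap.range (toEuclideanLin (single i j c))) ≤ 1 := by
  have hrange : LinearMap.range (toEuclideanLin (single i j c)) ≤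
      ℂ ∙ EuclideanSpace.single i (1 : ℂ) := by
    rintro _ ⟨x, rfl⟩
    refine Submodule.mem_span_singleton.2 ⟨c * x j, ?_⟩
    ext k
    simp [toLpLin_apply, single_apply, mulVec, dotProduct, ite_and, eq_comm]
  calc _ ≤ finrank ℂ (ℂ ∙ EuclideanSpace.single i (1 : ℂ)) := Submodule.finrank_mono hrange
    _ ≤ 1 := by simpa using finrank_span_le_card ({EuclideanSpace.single i (1 : ℂ)} : Set _)

theorem inner_toEuclideanLin_example (x : EuclideanSpace ℂ (Fin 4)) :
    inner ℂ x (toEuclideanLin (!![0, 1, 1, 0; 0, 0, 0, 1; 0, 0, 0, -1; 0, 0, 0, 0] :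
      Matrix (Fin 4) (Fin 4) ℂ) x) = conj (x 0) * (x 1 + x 2) + conj (x 1 - x 2) * x 3 := by
  simp [inner_toEuclideanLin_eq_sum_s14, Fin.sum_univ_four]
  ring

theorem numRadius_example :
    numRadius (!![0, 1, 1, 0; 0, 0, 0, 1; 0, 0, 0, -1; 0, 0, 0, 0] :
      Matrix (Fin 4) (Fin 4) ℂ) = √2 / 2 := by
  refine numRadius_eq_of_le_of_eq (fun x hx => ?_) !₂[(√2 / 2 : ℂ), 1 / 2, 1 / 2, 0] ?_ ?_
  · have hsum := EuclideanSpace.sum_norm_sq_eq_one hx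
    rw [Fin.sum_univ_four] at hsum
    have hpar := parallelogram_law_with_norm ℝ (x 1) (x 2)
    have htri : ‖conj (x 0) * (x 1 + x 2) + conj (x 1 - x 2) * x 3‖ ≤
        ‖x 0‖ * ‖x 1 + x 2‖ + ‖x 1 - x 2‖ * ‖x 3‖ := by
      refine (norm_add_le _ _).trans_eq ?_
      rw [norm_mul, norm_mul, Complex.norm_conj, Complex.norm_conj]
    -- Cauchy–Schwarz with `hpar`, then AM–GM on `(‖x 0‖² + ‖x 3‖²) (‖x 1‖² + ‖x 2‖²)`.
    have hcs : (‖x 0‖ * ‖x 1 + x 2‖ + ‖x 1 - x 2‖ * ‖x 3‖) ^ 2 ≤ 1 / 2 := by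
      nlinarith [sq_nonneg (‖x 0‖ * ‖x 1 - x 2‖ - ‖x 3‖ * ‖x 1 + x 2‖),
        sq_nonneg (‖x 0‖ ^ 2 + ‖x 3‖ ^ 2 - ‖x 1‖ ^ 2 - ‖x 2‖ ^ 2)]
    have hsqrt : (√2 / 2) ^ 2 = (1 / 2 : ℝ) := by
      rw [div_pow, Real.sq_sqrt zero_le_two]; norm_num
    rw [inner_toEuclideanLin_example]
    refine htri.trans ((pow_le_pow_iff_left₀ (by positivity) (by positivity) two_ne_zero).1 ?_)
    rwa [hsqrt]
  · rw [EuclideanSpace.norm_eq, Real.sqrt_eq_one]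
    simp [Fin.sum_univ_four, div_pow, abs_of_nonneg (Real.sqrt_nonneg 2)]
    norm_num
  · rw [inner_toEuclideanLin_example]
    simp [abs_of_nonneg (Real.sqrt_nonneg 2)]
    norm_num

theorem two_le_finrank_range_example :
    2 ≤ finrank ℂ (LinearMap.range (toEuclideanLin
      (!![0, 1, 1, 0; 0, 0, 0, 1; 0, 0, 0, -1; 0, 0, 0, 0] : Matrix (Fin 4) (Fin 4) ℂ))) := by
  set v : Fin 2 → EuclideanSpace ℂ (Fin 4) := ![!₂[1, 0, 0, 0], !₂[0, 1, -1, 0]]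
  have hv : LinearIndependent ℂ v := by
    rw [LinearIndependent.pair_iff]
    intro s t hst
    have h0 := congrArg (· 0) hst
    have h1 := congrArg (· 1) hst
    exact ⟨by simpa using h0, by simpa using h1⟩
  have hspan : Submodule.span ℂ (Set.range v) ≤ LinearMap.range (toEuclideanLin
      (!![0, 1, 1, 0; 0, 0, 0, 1; 0, 0, 0, -1; 0, 0, 0, 0] : Matrix (Fin 4) (Fin 4) ℂ)) := by
    rw [Submodule.span_le, Set.range_subset_iff]
    intro k
    fin_cases k
    · exact ⟨EuclideanSpace.single 1 1, by ext k; fin_cases k <;> simp [v, toLpLin_apply]⟩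
    · exact ⟨EuclideanSpace.single 3 1, by ext k; fin_cases k <;> simp [v, toLpLin_apply]⟩
  simpa [finrank_span_eq_card hv] using Submodule.finrank_mono hspan

/-- The 4×4 matrix with rows `[0,1,1,0], [0,0,0,1], [0,0,0,-1], [0,0,0,0]`
and the 3×3 matrix with single nonzero entry `√2` at position `(2,3)` both have numerical
radius `√2/2`, yet the 4×4 matrix is not unitarily similar to the direct sum of the 3×3 one
and a 1×1 zero. -/
theorem example_lower_bound_equality_without_direct_summand :
    numRadius (!![0, 1, 1, 0;
                  0, 0, 0, 1;
                  0, 0, 0, -1;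
                  0, 0, 0, 0] : Matrix (Fin 4) (Fin 4) ℂ) = Real.sqrt 2 / 2 ∧
    numRadius (!![0, 0, 0;
                  0, 0, (Real.sqrt 2 : ℂ);
                  0, 0, 0]) = Real.sqrt 2 / 2 ∧
    ¬ UnitarilySimilar
        (!![0, 1, 1, 0;
            0, 0, 0, 1;
            0, 0, 0, -1;
            0, 0, 0, 0] : Matrix (Fin 4) (Fin 4) ℂ)
        (Matrix.fromBlocks
          (!![0, 0, 0;
              0, 0, (Real.sqrt 2 : ℂ);
              0, 0, 0]) 0 0 (0 : Matrix (Fin 1) (Fin 1) ℂ)) := by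
  have hA'' : (!![0, 0, 0; 0, 0, (√2 : ℂ); 0, 0, 0] : Matrix (Fin 3) (Fin 3) ℂ) =
      single 1 2 (√2 : ℂ) := by
    ext i j
    fin_cases i <;> fin_cases j <;> simp [single]
  refine ⟨numRadius_example, ?_, fun h => ?_⟩
  · rw [hA'', numRadius_single (by decide), Complex.norm_real,
      Real.norm_of_nonneg (Real.sqrt_nonneg 2)]
  · have hrank := h.finrank_range_eq
    rw [hA'', fromBlocks_single_zero] at hrank
    have hle := finrank_range_toEuclideanLin_single_le_one (Sum.inl 1 : Fin 3 ⊕ Fin 1)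
      (Sum.inl 2) (√2 : ℂ)
    have hge := two_le_finrank_range_example
    omega
end
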